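/- arXiv:2403.04589 — 4 statements merged into one kernel-verified Lean document; each statement's English description precedes it below -/
import Mathlib

section
/- Let 𝒯 = (T, λ) be a temporal oriented tree and let u, v, w, x be four vertices of 𝒯 such that there exists a temporal path from u to v and a temporal path from w to x, and every temporal path from u to v shares at least one vertex with every temporal path from w to x. Then there is a temporal path from u to x, or a temporal path from w to v. -/
/-! A temporal digraph on vertex set `V` is encoded by its arc-labeling
`lab : V → V → Finset ℕ`: there is an arc `u → v` iff `lab u v` is nonempty,
and `lab u v` is the (finite) set of time-steps at which the arc `u → v` is active. -/

/-- A temporal (directed) path: vertices `verts 0, …, verts len`, pairwise distinct,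
traversed at strictly increasing times `times 0 < … < times (len-1)`, each arc being
active at the time it is traversed. A single vertex (`len = 0`) is a temporal path. -/
structure TPath {V : Type*} (lab : V → V → Finset ℕ) where
  len : ℕ
  verts : Fin (len + 1) → V
  times : Fin len → ℕ
  inj : Function.Injective verts
  mono : StrictMono times
  mem_lab : ∀ i : Fin len, times i ∈ lab (verts i.castSucc) (verts i.succ)

/-- The set of vertices lying on a temporal path. -/
def TPath.vertexSet {V : Type*} {lab : V → V → Finset ℕ} (P : TPath lab) : Set V :=
  Set.range P.verts

/-- `P` is a temporal path from `u` to `v`. -/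
def TPath.FromTo {V : Type*} {lab : V → V → Finset ℕ} (P : TPath lab) (u v : V) : Prop :=
  P.verts 0 = u ∧ P.verts (Fin.last P.len) = v

/-- Two vertices are temporally connected if some temporal path contains both of them. -/
def TempConnected {V : Type*} (lab : V → V → Finset ℕ) (u v : V) : Prop :=
  ∃ P : TPath lab, u ∈ P.vertexSet ∧ v ∈ P.vertexSet

/-- A temporal antichain: a set of pairwise not temporally connected vertices. -/
def IsTempAntichain {V : Type*} (lab : V → V → Finset ℕ) (S : Set V) : Prop :=
  S.Pairwise fun u v => ¬ TempConnected lab u v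

/-- A family of temporal paths is a temporal path cover if every vertex lies on some path. -/
def IsTPC {V : Type*} (lab : V → V → Finset ℕ) {m : ℕ} (C : Fin m → TPath lab) : Prop :=
  ∀ v : V, ∃ i, v ∈ (C i).vertexSet

/-- Two temporal paths are temporally disjoint if any two of their arcs sharing an
end-vertex are traversed at distinct time-steps. -/
def TDisjoint {V : Type*} {lab : V → V → Finset ℕ} (P Q : TPath lab) : Prop :=
  ∀ i : Fin P.len, ∀ j : Fin Q.len,
    (P.verts i.castSucc = Q.verts j.castSucc ∨ P.verts i.castSucc = Q.verts j.succ ∨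
     P.verts i.succ = Q.verts j.castSucc ∨ P.verts i.succ = Q.verts j.succ) →
    P.times i ≠ Q.times j

/-- The set of possible cardinalities of temporal path covers. -/
def tpcSizes {V : Type*} (lab : V → V → Finset ℕ) : Set ℕ :=
  {m | ∃ C : Fin m → TPath lab, IsTPC lab C}

/-- The set of possible cardinalities of temporally disjoint path covers. -/
def tdpcSizes {V : Type*} (lab : V → V → Finset ℕ) : Set ℕ :=
  {m | ∃ C : Fin m → TPath lab, IsTPC lab C ∧ ∀ i j, i ≠ j → TDisjoint (C i) (C j)}

/-- The set of possible cardinalities of temporal antichains. -/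
def antichainSizes {V : Type*} (lab : V → V → Finset ℕ) : Set ℕ :=
  {m | ∃ S : Finset V, S.card = m ∧ IsTempAntichain lab ↑S}

/-- The underlying undirected graph (forget orientations and labels). -/
def underlyingGraph {V : Type*} (lab : V → V → Finset ℕ) : SimpleGraph V where
  Adj u v := u ≠ v ∧ ((lab u v).Nonempty ∨ (lab v u).Nonempty)
  symm := by constructor; intro u v h; exact ⟨h.1.symm, h.2.symm⟩
  loopless := by constructor; intro v h; exact h.1 rfl

/-- All time labels are positive integers. -/
def PositiveLabels {V : Type*} (lab : V → V → Finset ℕ) : Prop :=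
  ∀ u v : V, ∀ t ∈ lab u v, 0 < t

/-- A temporal oriented tree: the underlying undirected graph is a tree and the digraph is
an orientation of it (no pair of opposite arcs, no loops). -/
def IsTemporalOrientedTree {V : Type*} (lab : V → V → Finset ℕ) : Prop :=
  (underlyingGraph lab).IsTree ∧ ∀ u v : V, (lab u v).Nonempty → lab v u = ∅

/-- The connectivity graph: two distinct vertices are adjacent iff temporally connected. -/
def connGraph {V : Type*} (lab : V → V → Finset ℕ) : SimpleGraph V where
  Adj u v := u ≠ v ∧ TempConnected lab u v
  symm := by constructor; intro u v h; exact ⟨h.1.symm, h.2.imp fun P hP => ⟨hP.2, hP.1⟩⟩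
  loopless := by constructor; intro v h; exact h.1 rfl

/-- `c` lists the vertices of an induced cycle of length `n` of `G`, in cyclic order:
the listed vertices are distinct and two of them are adjacent iff they are cyclically
consecutive. -/
def IsInducedCycle {V : Type*} (G : SimpleGraph V) (n : ℕ) (c : Fin n → V) : Prop :=
  Function.Injective c ∧
    ∀ i j : Fin n, G.Adj (c i) (c j) ↔ ((i.val + 1) % n = j.val ∨ (j.val + 1) % n = i.val)

/-- A hole: an induced cycle of length at least 5. -/
def HasHole {V : Type*} (G : SimpleGraph V) : Prop :=
  ∃ n, 5 ≤ n ∧ ∃ c : Fin n → V, IsInducedCycle G n c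

/-- An anti-hole: an induced subgraph whose complement is a cycle of length at least 5. -/
def HasAntihole {V : Type*} (G : SimpleGraph V) : Prop :=
  ∃ n, 5 ≤ n ∧ ∃ c : Fin n → V, IsInducedCycle Gᶜ n c

/-- A graph is weakly chordal if it has no hole and no anti-hole. -/
def WeaklyChordal {V : Type*} (G : SimpleGraph V) : Prop :=
  ¬ HasHole G ∧ ¬ HasAntihole G

/-! Let `P : u ⇝ v` and `Q : w ⇝ x` share a vertex. Splicing `P` up to its first vertex on `Q`
with the rest of `Q` gives a path `u ⇝ x`, which is temporal unless some arc of `P` before the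
junction is traversed no earlier than some arc of `Q` after it. Splice likewise `Q` up to its
first vertex on `P` with the rest of `P`. This second junction is no earlier on `P` and no later
on `Q` than the first one, so in the bad case every arc of `Q` before it precedes the offending
arc of `Q`, hence the offending arc of `P`, hence every arc of `P` after it: the second splice is
a temporal path `w ⇝ v`. -/

namespace TPath

variable {V : Type*} {lab : V → V → Finset ℕ}

def take (P : TPath lab) (i : Fin (P.len + 1)) : TPath lab where
  len := i
  verts k := P.verts (Fin.castLE (Nat.succ_le_succ i.is_le) k)
  times k := P.times (Fin.castLE i.is_le k)
  inj := P.inj.comp (Fin.castLE_injective _)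
  mono := P.mono.comp (Fin.strictMono_castLE _)
  mem_lab k := P.mem_lab (Fin.castLE i.is_le k)

def drop (P : TPath lab) (j : Fin (P.len + 1)) : TPath lab where
  len := P.len - j
  verts k := P.verts ⟨j + k, by omega⟩
  times k := P.times ⟨j + k, by omega⟩
  inj a b h := Fin.ext <| by have := congrArg Fin.val (P.inj h); simp only at this; omega
  mono a b h := P.mono <| Fin.mk_lt_mk.2 <| Nat.add_lt_add_left h _
  mem_lab k := by
    convert P.mem_lab ⟨j + k, by omega⟩ using 3 <;> ext <;> simp [add_assoc]

def append (P Q : TPath lab) (hjoin : P.verts (Fin.last P.len) = Q.verts 0)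
    (hdisj : ∀ (s : Fin P.len) t, P.verts s.castSucc ≠ Q.verts t)
    (htime : ∀ s t, P.times s < Q.times t) : TPath lab where
  len := P.len + Q.len
  verts k := if h : k.val < P.len then P.verts ⟨k, by omega⟩ else Q.verts ⟨k - P.len, by omega⟩
  times k := if h : k.val < P.len then P.times ⟨k, h⟩ else Q.times ⟨k - P.len, by omega⟩
  inj a b hab := by
    dsimp only at hab
    split_ifs at hab with ha hb hb
    · simpa [Fin.ext_iff] using P.inj hab
    · exact absurd hab (hdisj ⟨a, ha⟩ _)
    · exact absurd hab.symm (hdisj ⟨b, hb⟩ _)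
    · have := congrArg Fin.val (Q.inj hab)
      simp only at this
      exact Fin.ext (by omega)
  mono a b hab := by
    rw [Fin.lt_def] at hab
    dsimp only
    split_ifs with ha hb hb
    · exact P.mono hab
    · exact htime _ _
    · omega
    · exact Q.mono (by simp only [Fin.lt_def]; omega)
  mem_lab k := by
    simp only [Fin.val_castSucc, Fin.val_succ]
    split_ifs with h1 h2 h2
    · exact P.mem_lab ⟨k, h1⟩
    · have hlast : (⟨k, h1⟩ : Fin P.len).succ = Fin.last P.len := Fin.ext (by simp; omega)
      have hfirst : (⟨k + 1 - P.len, by omega⟩ : Fin (Q.len + 1)) = 0 := Fin.ext (by simp; omega)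
      rw [hfirst, ← hjoin, ← hlast]
      exact P.mem_lab ⟨k, h1⟩
    · omega
    · convert Q.mem_lab ⟨k - P.len, by omega⟩ using 3 <;> ext <;> simp
      omega

theorem fromTo_take (P : TPath lab) (i : Fin (P.len + 1)) :
    (P.take i).FromTo (P.verts 0) (P.verts i) :=
  ⟨rfl, congrArg P.verts (Fin.ext rfl)⟩

theorem fromTo_drop (P : TPath lab) (j : Fin (P.len + 1)) :
    (P.drop j).FromTo (P.verts j) (P.verts (Fin.last P.len)) :=
  ⟨rfl, congrArg P.verts (Fin.ext (Nat.add_sub_cancel' j.is_le))⟩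

theorem fromTo_append (P Q : TPath lab) (hjoin : P.verts (Fin.last P.len) = Q.verts 0)
    (hdisj : ∀ (s : Fin P.len) t, P.verts s.castSucc ≠ Q.verts t)
    (htime : ∀ s t, P.times s < Q.times t) :
    (P.append Q hjoin hdisj htime).FromTo (P.verts 0) (Q.verts (Fin.last Q.len)) := by
  constructor
  · by_cases h : 0 < P.len
    · exact dif_pos h
    · exact (dif_neg h).trans <| (congrArg Q.verts (Fin.ext (Nat.zero_sub _))).trans <|
        hjoin.symm.trans (congrArg P.verts (Fin.ext (by simp; omega)))
  · exact (dif_neg (Nat.not_lt.2 (Nat.le_add_right _ _))).trans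
      (congrArg Q.verts (Fin.ext (Nat.add_sub_cancel_left ..)))

theorem exists_fromTo_splice (P Q : TPath lab) (i : Fin (P.len + 1)) (j : Fin (Q.len + 1))
    (hij : P.verts i = Q.verts j) (hdisj : ∀ s < i, P.verts s ∉ Q.vertexSet)
    (htime : ∀ (s : Fin P.len) (t : Fin Q.len), (s : ℕ) < i → (j : ℕ) ≤ t →
      P.times s < Q.times t) :
    ∃ R : TPath lab, R.FromTo (P.verts 0) (Q.verts (Fin.last Q.len)) := by
  have hjoin := (P.fromTo_take i).2.trans (hij.trans (Q.fromTo_drop j).1.symm)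
  have hR := fromTo_append (P.take i) (Q.drop j) hjoin
    (fun s t h => hdisj _ (Fin.mk_lt_mk.2 s.isLt) ⟨_, h.symm⟩)
    (fun s t => htime _ ⟨j + t, by have : (t : ℕ) < Q.len - j := t.isLt; omega⟩ s.isLt
      (Nat.le_add_right _ _))
  exact ⟨_, hR.1, hR.2.trans (Q.fromTo_drop j).2⟩

theorem exists_first_mem (P : TPath lab) {S : Set V} (h : (P.vertexSet ∩ S).Nonempty) :
    ∃ i, P.verts i ∈ S ∧ ∀ s < i, P.verts s ∉ S := by
  obtain ⟨_, ⟨i, rfl⟩, hi⟩ := h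
  obtain ⟨i, hi, hmin⟩ := wellFounded_lt.has_min {i | P.verts i ∈ S} ⟨i, hi⟩
  exact ⟨i, hi, fun s hs hsS => hmin s hsS hs⟩

theorem exists_fromTo_or_exists_fromTo_of_inter_nonempty {P Q : TPath lab} {u v w x : V}
    (hP : P.FromTo u v) (hQ : Q.FromTo w x) (h : (P.vertexSet ∩ Q.vertexSet).Nonempty) :
    (∃ R : TPath lab, R.FromTo u x) ∨ ∃ R : TPath lab, R.FromTo w v := by
  obtain ⟨i₀, ⟨j₁, hj₁⟩, hi₀⟩ := P.exists_first_mem h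
  obtain ⟨j₀, ⟨i₁, hi₁⟩, hj₀⟩ := Q.exists_first_mem (Set.inter_comm _ _ ▸ h)
  have hi : i₀ ≤ i₁ := not_lt.1 fun hlt => hi₀ i₁ hlt ⟨j₀, hi₁.symm⟩
  have hj : j₀ ≤ j₁ := not_lt.1 fun hlt => hj₀ j₁ hlt ⟨i₀, hj₁.symm⟩
  by_cases htime : ∀ (s : Fin P.len) (t : Fin Q.len), (s : ℕ) < i₀ → (j₁ : ℕ) ≤ t →
      P.times s < Q.times t
  · exact .inl (hP.1 ▸ hQ.2 ▸ P.exists_fromTo_splice Q i₀ j₁ hj₁.symm hi₀ htime)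
  · right
    push Not at htime
    obtain ⟨s, t, hs, ht, hts⟩ := htime
    refine hQ.1 ▸ hP.2 ▸ Q.exists_fromTo_splice P j₀ i₁ hi₁.symm hj₀ fun t' s' ht' hs' => ?_
    rw [Fin.le_def] at hi hj
    calc Q.times t' < Q.times t := Q.mono (Fin.lt_def.2 (by omega))
      _ ≤ P.times s := hts
      _ < P.times s' := P.mono (Fin.lt_def.2 (by omega))

end TPath

theorem intersecting_paths_general {V : Type*} (lab : V → V → Finset ℕ) (u v w x : V)
    (huv : ∃ P : TPath lab, P.FromTo u v) (hwx : ∃ Q : TPath lab, Q.FromTo w x)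
    (hint : ∀ P Q : TPath lab, P.FromTo u v → Q.FromTo w x →
      (P.vertexSet ∩ Q.vertexSet).Nonempty) :
    (∃ R : TPath lab, R.FromTo u x) ∨ (∃ R : TPath lab, R.FromTo w v) := by
  obtain ⟨P, hP⟩ := huv
  obtain ⟨Q, hQ⟩ := hwx
  exact TPath.exists_fromTo_or_exists_fromTo_of_inter_nonempty hP hQ (hint P Q hP hQ)

/-- If every temporal path from u to v intersects every temporal path from w to x
in a temporal oriented tree (and both such paths exist), then there is a temporal path
from u to x or one from w to v. -/
theorem intersecting_paths {V : Type*} [Fintype V] (lab : V → V → Finset ℕ)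
    (hpos : PositiveLabels lab) (htree : IsTemporalOrientedTree lab) (u v w x : V)
    (huv : ∃ P : TPath lab, P.FromTo u v) (hwx : ∃ Q : TPath lab, Q.FromTo w x)
    (hint : ∀ P Q : TPath lab, P.FromTo u v → Q.FromTo w x →
      (P.vertexSet ∩ Q.vertexSet).Nonempty) :
    (∃ R : TPath lab, R.FromTo u x) ∨ (∃ R : TPath lab, R.FromTo w v) :=
  intersecting_paths_general lab u v w x huv hwx hint
end

section
/- Let 𝒯 = (T, λ) be a temporal oriented tree, let G be its connectivity graph, and let H be an induced cycle of G of length at least 4. Then for every vertex v of H and every arc a of T incident with v, all vertices of H other than v lie in the same connected component of T with the arc a removed. -/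
/-! An arc `xy` used by a temporal path between two cycle vertices `c m`, `c (m + 1)` puts
`c i₀ ∈ {x, y}` on that path too, making `c i₀` adjacent in the connectivity graph to two
consecutive cycle vertices, which an induced cycle of length at least 4 forbids. So each
consecutive pair avoiding `c i₀` is joined by a temporal path that misses the arc, and hence
by a walk of the underlying graph avoiding it; chaining these around the cycle minus `c i₀`
connects all the remaining vertices. -/

namespace TPath

variable {V : Type*} {lab : V → V → Finset ℕ}

theorem adj (P : TPath lab) (i : Fin P.len) :
    (underlyingGraph lab).Adj (P.verts i.castSucc) (P.verts i.succ) :=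
  ⟨P.inj.ne (Fin.castSucc_lt_succ).ne, Or.inl ⟨_, P.mem_lab i⟩⟩

theorem reachable_deleteEdges (P : TPath lab) {x y : V}
    (hxy : ¬ (x ∈ P.vertexSet ∧ y ∈ P.vertexSet)) (p q : Fin (P.len + 1)) :
    ((underlyingGraph lab).deleteEdges {s(x, y)}).Reachable (P.verts p) (P.verts q) := by
  suffices h : ∀ p, ((underlyingGraph lab).deleteEdges {s(x, y)}).Reachable
      (P.verts 0) (P.verts p) from (h p).symm.trans (h q)
  intro p
  induction p using Fin.induction with
  | zero => rfl
  | succ i ih =>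
    refine ih.trans (SimpleGraph.Adj.reachable ?_)
    refine (SimpleGraph.deleteEdges_adj ..).2 ⟨P.adj i, fun he => hxy ?_⟩
    rcases Sym2.eq_iff.1 (Set.mem_singleton_iff.1 he) with ⟨hx, hy⟩ | ⟨hy, hx⟩ <;>
      exact ⟨⟨_, hx⟩, ⟨_, hy⟩⟩

end TPath

theorem TempConnected.reachable_deleteEdges_or {V : Type*} {lab : V → V → Finset ℕ} {u w : V}
    (h : TempConnected lab u w) (x y : V) :
    ((underlyingGraph lab).deleteEdges {s(x, y)}).Reachable u w ∨
      ∃ P : TPath lab, u ∈ P.vertexSet ∧ w ∈ P.vertexSet ∧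
        x ∈ P.vertexSet ∧ y ∈ P.vertexSet := by
  obtain ⟨P, ⟨p, rfl⟩, ⟨q, rfl⟩⟩ := h
  by_cases hxy : x ∈ P.vertexSet ∧ y ∈ P.vertexSet
  · exact Or.inr ⟨P, ⟨p, rfl⟩, ⟨q, rfl⟩, hxy⟩
  · exact Or.inl (P.reachable_deleteEdges hxy p q)

open Fin.NatCast in
theorem Fin.natCast_ne_zero_of_lt {n k : ℕ} [NeZero n] (hk : 0 < k) (hkn : k < n) :
    (k : Fin n) ≠ 0 :=
  fun h => (Nat.le_of_dvd hk (Fin.natCast_eq_zero.1 h)).not_gt hkn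

namespace IsInducedCycle

variable {V : Type*} {G : SimpleGraph V} {n : ℕ} [NeZero n] {c : Fin n → V}

theorem adj_iff (hc : IsInducedCycle G n c) (i j : Fin n) :
    G.Adj (c i) (c j) ↔ i + 1 = j ∨ j + 1 = i := by
  simp only [hc.2, Fin.ext_iff, Fin.val_add, Fin.val_one', Nat.add_mod_mod]

open Fin.NatCast Fin.CommRing in
theorem not_adj_add_one_of_adj (hc : IsInducedCycle G n c) (hn : 4 ≤ n) {i m : Fin n}
    (h : G.Adj (c i) (c m)) : ¬ G.Adj (c i) (c (m + 1)) := by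
  have h₁₀ : ((1 : ℕ) : Fin n) ≠ 0 := Fin.natCast_ne_zero_of_lt one_pos (by omega)
  have h₃₀ : ((3 : ℕ) : Fin n) ≠ 0 := Fin.natCast_ne_zero_of_lt three_pos (by omega)
  push_cast at h₁₀ h₃₀
  intro h'
  rcases hc.adj_iff i m |>.1 h with h₁ | h₁ <;> rcases hc.adj_iff i (m + 1) |>.1 h' with h₂ | h₂
  · exact h₁₀ (by linear_combination h₁ - h₂)
  · exact h₃₀ (by linear_combination h₁ + h₂)
  · exact h₁₀ (by linear_combination h₂ + h₁)
  · exact h₁₀ (by linear_combination h₂ - h₁)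

end IsInducedCycle

open Fin.NatCast in
theorem SimpleGraph.reachable_of_reachable_add_one {V : Type*} {G : SimpleGraph V} {n : ℕ}
    [NeZero n] {c : Fin n → V} {i₀ : Fin n}
    (hstep : ∀ m, m ≠ i₀ → m + 1 ≠ i₀ → G.Reachable (c m) (c (m + 1)))
    {j k : Fin n} (hj : j ≠ i₀) (hk : k ≠ i₀) : G.Reachable (c j) (c k) := by
  have hne : ∀ t : ℕ, t + 1 < n → i₀ + (t + 1 : ℕ) ≠ i₀ := fun t ht h =>
    Fin.natCast_ne_zero_of_lt t.succ_pos ht (add_eq_left.1 h)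
  have hchain : ∀ t : ℕ, t + 1 < n → G.Reachable (c (i₀ + 1)) (c (i₀ + (t + 1 : ℕ))) := by
    intro t
    induction t with
    | zero => intro _; simp
    | succ t ih =>
      intro ht
      have hsucc : i₀ + ((t + 1 + 1 : ℕ) : Fin n) = i₀ + (t + 1 : ℕ) + 1 := by push_cast; abel
      rw [hsucc]
      refine (ih (by omega)).trans (hstep _ (hne t (by omega)) ?_)
      rw [← hsucc]
      exact hne (t + 1) ht
  have hrep : ∀ j, j ≠ i₀ → ∃ t : ℕ, t + 1 < n ∧ j = i₀ + (t + 1 : ℕ) := by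
    intro j hj
    have hpos : (j - i₀).val ≠ 0 := fun h => hj (sub_eq_zero.1 (Fin.ext h))
    refine ⟨(j - i₀).val - 1, by omega, ?_⟩
    rw [Nat.sub_add_cancel (Nat.one_le_iff_ne_zero.2 hpos), Fin.cast_val_eq_self, add_sub_cancel]
  obtain ⟨tj, htj, rfl⟩ := hrep j hj
  obtain ⟨tk, htk, rfl⟩ := hrep k hk
  exact (hchain tj htj).symm.trans (hchain tk htk)

theorem cycle_vertices_same_component_general {V : Type*} (lab : V → V → Finset ℕ)
    (n : ℕ) (hn : 4 ≤ n) (c : Fin n → V) (hc : IsInducedCycle (connGraph lab) n c)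
    (i0 : Fin n) (x y : V) (hinc : x = c i0 ∨ y = c i0) :
    ∀ j k : Fin n, j ≠ i0 → k ≠ i0 →
      ((underlyingGraph lab).deleteEdges {s(x, y)}).Reachable (c j) (c k) := by
  have : NeZero n := ⟨by omega⟩
  intro j k hj hk
  refine SimpleGraph.reachable_of_reachable_add_one (fun m hm hm₁ => ?_) hj hk
  obtain ⟨-, hconn⟩ := (hc.adj_iff m (m + 1)).2 (Or.inl rfl)
  refine (hconn.reachable_deleteEdges_or x y).resolve_right ?_
  rintro ⟨P, hmP, hm₁P, hx, hy⟩
  have hi₀ : c i0 ∈ P.vertexSet := hinc.elim (· ▸ hx) (· ▸ hy)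
  have hadj : ∀ {l}, l ≠ i0 → c l ∈ P.vertexSet → (connGraph lab).Adj (c i0) (c l) :=
    fun hl hlP => ⟨hc.1.ne hl.symm, P, hi₀, hlP⟩
  exact hc.not_adj_add_one_of_adj hn (hadj hm hmP) (hadj hm₁ hm₁P)

/-- For an induced cycle of length ≥ 4 in the connectivity graph of a temporal oriented
tree, every vertex v of the cycle and arc a of the tree incident with v: all vertices of the
cycle other than v lie in the same connected component of the tree with the arc removed. -/
theorem cycle_vertices_same_component {V : Type*} [Fintype V] (lab : V → V → Finset ℕ)
    (hpos : PositiveLabels lab) (htree : IsTemporalOrientedTree lab)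
    (n : ℕ) (hn : 4 ≤ n) (c : Fin n → V) (hc : IsInducedCycle (connGraph lab) n c)
    (i0 : Fin n) (x y : V) (harc : (lab x y).Nonempty) (hinc : x = c i0 ∨ y = c i0) :
    ∀ j k : Fin n, j ≠ i0 → k ≠ i0 →
      ((underlyingGraph lab).deleteEdges {s(x, y)}).Reachable (c j) (c k) :=
  cycle_vertices_same_component_general lab n hn c hc i0 x y hinc
end

section
/- Let 𝒯 = (T, λ) be a temporal oriented tree and let G be its connectivity graph. Then G contains no odd hole, i.e., no induced cycle of odd length at least 5. -/
/-! Orient each edge `c k, c (k + 1)` of a hole `c` of the connectivity graph along a temporal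
path through both ends. Such a path is a clique of the connectivity graph, so it meets the hole
only in `c k` and `c (k + 1)`; hence the rest of the hole joins `c (i - 1)` to `c (i + 1)` in the
tree with `c i` deleted. If the hole edge before `c i` entered `c i` while the one after left it
(or conversely), their arcs at `c i` would be two distinct tree edges whose far ends are joined
avoiding `c i`, a cycle in the tree. So the orientations alternate around the hole, and its
length is even. -/

open SimpleGraph

section

variable {V : Type*}

theorem SimpleGraph.reachable_of_adj_castSucc_succ (G : SimpleGraph V) {m : ℕ}
    (f : Fin (m + 1) → V) {a b : Fin (m + 1)} (hab : a ≤ b)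
    (h : ∀ j : Fin m, a ≤ j.castSucc → j.succ ≤ b → G.Adj (f j.castSucc) (f j.succ)) :
    G.Reachable (f a) (f b) := by
  induction b using Fin.induction with
  | zero => rw [Fin.le_zero_iff.mp hab]
  | succ j ih =>
    rcases hab.eq_or_lt with rfl | hlt
    · rfl
    · have hj : a ≤ j.castSucc := Fin.le_castSucc_iff.mpr hlt
      exact (ih hj fun k hk hkj => h k hk (hkj.trans j.castSucc_le_succ)).trans
        (h j hj le_rfl).reachable

theorem SimpleGraph.reachable_add_of_forall_reachable_add_one {ι : Type*} [AddMonoidWithOne ι]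
    (G : SimpleGraph V) (c : ι → V) (j : ι) (m : ℕ)
    (h : ∀ l < m, G.Reachable (c (j + l)) (c (j + l + 1))) :
    G.Reachable (c j) (c (j + m)) := by
  induction m with
  | zero => simp
  | succ m ih =>
    simpa only [Nat.cast_succ, ← add_assoc] using
      (ih fun l hl => h l (by omega)).trans (h m (by omega))

theorem SimpleGraph.IsAcyclic.not_reachable_deleteIncidenceSet {G : SimpleGraph V}
    (hG : G.IsAcyclic) {x y z : V} (hy : G.Adj y x) (hz : G.Adj z x) (hyz : y ≠ z) :
    ¬ (G.deleteIncidenceSet x).Reachable y z := by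
  -- `s(y, x)` is a bridge, but `y ⋯ z - x` would avoid it
  intro hreach
  have hzx : (G.deleteEdges {s(y, x)}).Adj z x := by
    rw [deleteEdges_adj]
    exact ⟨hz, by simp [hyz.symm, hz.ne]⟩
  have hle : G.deleteIncidenceSet x ≤ G.deleteEdges {s(y, x)} := fun u v huv => by
    rw [deleteIncidenceSet_adj] at huv
    rw [deleteEdges_adj]
    exact ⟨huv.1, by simp [huv.2.1, huv.2.2]⟩
  exact isBridge_iff.mp (isAcyclic_iff_forall_adj_isBridge.mp hG hy)
    ((hreach.mono hle).trans hzx.reachable)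

theorem ZMod.natCast_ne_zero_of_lt {n a : ℕ} (h0 : 0 < a) (h : a < n) : (a : ZMod n) ≠ 0 :=
  fun ha => absurd (Nat.le_of_dvd h0 ((ZMod.natCast_eq_zero_iff a n).mp ha)) (by omega)

theorem ZMod.even_of_forall_add_one_iff_not {n : ℕ} (p : ZMod n → Prop)
    (h : ∀ k, p (k + 1) ↔ ¬ p k) : Even n := by
  by_contra hn
  have hsemi : Function.Semiconj p (· + 1) Not := fun k => propext (h k)
  have hnot : Function.Involutive Not := fun _ => propext not_not
  have h0 := hsemi.iterate_right n 0
  simp only [add_right_iterate, nsmul_one, ZMod.natCast_self, add_zero,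
    hnot.iterate_odd (Nat.not_even_iff_odd.mp hn)] at h0
  exact iff_not_self (Iff.of_eq h0)

def IsInducedCycleZMod (G : SimpleGraph V) (n : ℕ) (c : ZMod n → V) : Prop :=
  Function.Injective c ∧ ∀ a b, G.Adj (c a) (c b) ↔ b = a + 1 ∨ a = b + 1

theorem IsInducedCycle.zmod {G : SimpleGraph V} {n : ℕ} [NeZero n] {c : Fin n → V}
    (hc : IsInducedCycle G n c) : IsInducedCycleZMod G n (c ∘ (ZMod.finEquiv n).symm) := by
  set e := (ZMod.finEquiv n).symm
  have hsucc (a b : ZMod n) : ((e a).val + 1) % n = (e b).val ↔ b = a + 1 := by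
    rw [← e.injective.eq_iff, map_add, map_one, Fin.ext_iff, Fin.val_add, Fin.val_one',
      Nat.add_mod_mod, eq_comm]
  exact ⟨hc.1.comp e.injective, fun a b => (hc.2 _ _).trans (or_congr (hsucc a b) (hsucc b a))⟩

namespace IsInducedCycleZMod

variable {G : SimpleGraph V} {n : ℕ} {c : ZMod n → V}

theorem adj_add_one (hc : IsInducedCycleZMod G n c) (k : ZMod n) : G.Adj (c k) (c (k + 1)) :=
  (hc.2 k (k + 1)).mpr (Or.inl rfl)

theorem not_adj_and_adj_add_one (hc : IsInducedCycleZMod G n c) (hn : 4 ≤ n) (m k : ZMod n) :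
    ¬ (G.Adj (c m) (c k) ∧ G.Adj (c m) (c (k + 1))) := by
  rintro ⟨hk, hk1⟩
  rw [hc.2] at hk hk1
  have h1 : ((1 : ℕ) : ZMod n) ≠ 0 := ZMod.natCast_ne_zero_of_lt one_pos (by omega)
  have h3 : ((3 : ℕ) : ZMod n) ≠ 0 := ZMod.natCast_ne_zero_of_lt three_pos (by omega)
  push_cast at h1 h3
  rcases hk with rfl | rfl <;> rcases hk1 with h | h
  · exact h1 (by linear_combination h)
  · exact h3 (by linear_combination -h)
  · exact h1 (by linear_combination -h)
  · exact h1 (by linear_combination -h)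

end IsInducedCycleZMod

def TempReaches (lab : V → V → Finset ℕ) (u v : V) : Prop :=
  ∃ P : TPath lab, ∃ a b, a < b ∧ P.verts a = u ∧ P.verts b = v

variable {lab : V → V → Finset ℕ}

theorem TempConnected.tempReaches_or {u v : V} (h : TempConnected lab u v) (huv : u ≠ v) :
    TempReaches lab u v ∨ TempReaches lab v u := by
  obtain ⟨P, ⟨a, rfl⟩, ⟨b, rfl⟩⟩ := h
  rcases lt_or_gt_of_ne (P.inj.ne_iff.mp huv) with hab | hba
  · exact Or.inl ⟨P, a, b, hab, rfl, rfl⟩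
  · exact Or.inr ⟨P, b, a, hba, rfl, rfl⟩

namespace TPath

theorem adj_underlyingGraph (P : TPath lab) (j : Fin P.len) :
    (underlyingGraph lab).Adj (P.verts j.castSucc) (P.verts j.succ) :=
  ⟨P.inj.ne j.castSucc_lt_succ.ne, Or.inl ⟨_, P.mem_lab j⟩⟩

theorem reachable_deleteIncidenceSet (P : TPath lab) {x : V} {a b : Fin (P.len + 1)}
    (hab : a ≤ b) (hx : ∀ j, a ≤ j → j ≤ b → P.verts j ≠ x) :
    ((underlyingGraph lab).deleteIncidenceSet x).Reachable (P.verts a) (P.verts b) :=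
  reachable_of_adj_castSucc_succ _ P.verts hab fun j hj hjb =>
    deleteIncidenceSet_adj.mpr ⟨P.adj_underlyingGraph j, hx _ hj (j.castSucc_le_succ.trans hjb),
      hx _ (hj.trans j.castSucc_le_succ) hjb⟩

theorem reachable_deleteIncidenceSet_of_notMem (P : TPath lab) {x u v : V}
    (hx : x ∉ P.vertexSet) (hu : u ∈ P.vertexSet) (hv : v ∈ P.vertexSet) :
    ((underlyingGraph lab).deleteIncidenceSet x).Reachable u v := by
  obtain ⟨a, rfl⟩ := hu
  obtain ⟨b, rfl⟩ := hv
  have hx' : ∀ j, P.verts j ≠ x := fun j hj => hx ⟨j, hj⟩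
  rcases le_total a b with hab | hba
  · exact P.reachable_deleteIncidenceSet hab fun j _ _ => hx' j
  · exact (P.reachable_deleteIncidenceSet hba fun j _ _ => hx' j).symm

end TPath

/-- The last arc of a temporal path from `u` to `x` and the first arc of one from `x` to `w`
are distinct tree edges at `x`, since the tree is oriented, and the rest of the two paths
avoids `x`. -/
theorem IsTemporalOrientedTree.not_reachable_deleteIncidenceSet
    (htree : IsTemporalOrientedTree lab) {u x w : V}
    (hux : TempReaches lab u x) (hxw : TempReaches lab x w) :
    ¬ ((underlyingGraph lab).deleteIncidenceSet x).Reachable u w := by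
  obtain ⟨P, a, b, hab, rfl, hbx⟩ := hux
  obtain ⟨Q, a', b', hab', hxa, rfl⟩ := hxw
  obtain ⟨j, rfl⟩ := Fin.eq_succ_of_ne_zero ((Fin.zero_le a).trans_lt hab).ne'
  obtain ⟨j', rfl⟩ := Fin.exists_castSucc_eq.mpr (hab'.trans_le (Fin.le_last b')).ne
  have hyz : P.verts j.castSucc ≠ Q.verts j'.succ := by
    intro h
    have hin : (lab (P.verts j.castSucc) x).Nonempty := hbx ▸ ⟨_, P.mem_lab j⟩
    have hout : (lab x (P.verts j.castSucc)).Nonempty := hxa ▸ h ▸ ⟨_, Q.mem_lab j'⟩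
    exact hout.ne_empty (htree.2 _ _ hin)
  have hbefore := P.reachable_deleteIncidenceSet (x := x) (Fin.le_castSucc_iff.mpr hab)
    fun k _ hk => hbx ▸ P.inj.ne (hk.trans_lt j.castSucc_lt_succ).ne
  have hafter := Q.reachable_deleteIncidenceSet (x := x) (Fin.castSucc_lt_iff_succ_le.mp hab')
    fun k hk _ => hxa ▸ Q.inj.ne (j'.castSucc_lt_succ.trans_le hk).ne'
  exact fun h => htree.1.isAcyclic.not_reachable_deleteIncidenceSet
    (hbx ▸ P.adj_underlyingGraph j) (hxa ▸ (Q.adj_underlyingGraph j').symm) hyz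
    (hbefore.symm.trans (h.trans hafter.symm))

theorem IsInducedCycleZMod.reachable_deleteIncidenceSet {n : ℕ} {c : ZMod n → V}
    (hc : IsInducedCycleZMod (connGraph lab) n c) (hn : 4 ≤ n) (i : ZMod n) :
    ((underlyingGraph lab).deleteIncidenceSet (c (i + 1))).Reachable (c (i + 1 + 1)) (c i) := by
  set G := (underlyingGraph lab).deleteIncidenceSet (c (i + 1))
  have hstep : ∀ l < n - 2, G.Reachable (c (i + 1 + 1 + l)) (c (i + 1 + 1 + l + 1)) := by
    intro l hl
    obtain ⟨P, hk, hk1⟩ := (hc.adj_add_one (i + 1 + 1 + l)).2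
    refine P.reachable_deleteIncidenceSet_of_notMem (fun hx => ?_) hk hk1
    have hl1 := ZMod.natCast_ne_zero_of_lt (n := n) (a := l + 1) (by omega) (by omega)
    have hl2 := ZMod.natCast_ne_zero_of_lt (n := n) (a := l + 2) (by omega) (by omega)
    push_cast at hl1 hl2
    refine hc.not_adj_and_adj_add_one hn (i + 1) (i + 1 + 1 + l)
      ⟨⟨fun h => hl1 ?_, P, hx, hk⟩, ⟨fun h => hl2 ?_, P, hx, hk1⟩⟩
    · linear_combination -(hc.1 h)
    · linear_combination -(hc.1 h)
  have hwrap : i + 1 + 1 + ((n - 2 : ℕ) : ZMod n) = i := by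
    rw [Nat.cast_sub (by omega), ZMod.natCast_self]
    push_cast
    ring
  simpa only [hwrap] using G.reachable_add_of_forall_reachable_add_one c (i + 1 + 1) (n - 2) hstep

theorem IsInducedCycleZMod.tempReaches_add_one_iff (htree : IsTemporalOrientedTree lab)
    {n : ℕ} {c : ZMod n → V} (hc : IsInducedCycleZMod (connGraph lab) n c) (hn : 4 ≤ n)
    (i : ZMod n) :
    TempReaches lab (c (i + 1)) (c (i + 1 + 1)) ↔ ¬ TempReaches lab (c i) (c (i + 1)) := by
  have hsep := hc.reachable_deleteIncidenceSet hn i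
  have hreaches_or (k : ZMod n) := (hc.adj_add_one k).2.tempReaches_or (hc.adj_add_one k).1
  constructor
  · exact fun hout hin => htree.not_reachable_deleteIncidenceSet hin hout hsep.symm
  · intro hin
    by_contra hout
    exact htree.not_reachable_deleteIncidenceSet ((hreaches_or (i + 1)).resolve_left hout)
      ((hreaches_or i).resolve_left hin) hsep

end

theorem connGraph_no_odd_hole_general {V : Type*} (lab : V → V → Finset ℕ)
    (htree : IsTemporalOrientedTree lab) :
    ¬ ∃ n : ℕ, 5 ≤ n ∧ Odd n ∧ ∃ c : Fin n → V, IsInducedCycle (connGraph lab) n c := by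
  rintro ⟨n, hn, hodd, c, hc⟩
  have : NeZero n := ⟨by omega⟩
  set c' := c ∘ (ZMod.finEquiv n).symm
  have halt := hc.zmod.tempReaches_add_one_iff htree (by omega)
  exact Nat.not_even_iff_odd.mpr hodd
    (ZMod.even_of_forall_add_one_iff_not (fun k => TempReaches lab (c' k) (c' (k + 1))) halt)

/-- The connectivity graph of a temporal oriented tree contains no odd hole. -/
theorem connGraph_no_odd_hole {V : Type*} [Fintype V] (lab : V → V → Finset ℕ)
    (hpos : PositiveLabels lab) (htree : IsTemporalOrientedTree lab) :
    ¬ ∃ n : ℕ, 5 ≤ n ∧ Odd n ∧ ∃ c : Fin n → V, IsInducedCycle (connGraph lab) n c :=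
  connGraph_no_odd_hole_general lab htree
end

section
/- Let 𝒯 = (T, λ) be a temporal oriented tree and let G be its connectivity graph. Then G contains no anti-hole, i.e., no induced subgraph whose complement is a cycle of length at least 5. -/
/-! Orient each edge `u ~ v` of the connectivity graph by temporal reachability. In a temporal
oriented tree, a temporal path from `u` to `v` runs along the tree path from `u` to `v`, so that
path is directed and all its vertices are temporally connected to both ends. If `x ⇝ y ⇝ z`, the
two directed tree paths concatenate to the tree path from `x` to `z`, so `y` lies on every walk
from `x` to `z`; in particular, along any chain `x ~ v ~ v' ~ z`, `y` is temporally connected to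
`v` or to `v'`.

In an anti-hole `c₀, …, c_{n-1}`, the vertices `c₁, c₃, c₅, c₂, c₄` (indices mod `n`) form a closed
walk of length five in the connectivity graph, and each of its vertices `cⱼ` is linked to its two
neighbours on it by such a chain through its non-neighbours `cⱼ₋₁, cⱼ₊₁`. So the two edges at
every vertex of this odd closed walk are oriented oppositely, which is impossible. -/

open SimpleGraph

section

variable {V : Type*} {lab : V → V → Finset ℕ}

def TPath.slice (P : TPath lab) (a b : ℕ) (hab : a ≤ b) (hb : b ≤ P.len) : TPath lab where
  len := b - a
  verts i := P.verts ⟨a + i, by omega⟩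
  times i := P.times ⟨a + i, by omega⟩
  inj i j h := Fin.ext (by simpa using congrArg Fin.val (P.inj h))
  mono i j h := P.mono (Fin.mk_lt_mk.2 (Nat.add_lt_add_left h a))
  mem_lab i := by
    convert P.mem_lab ⟨a + i, by omega⟩ using 3 <;> ext <;> simp [Nat.add_assoc]

def TempReach (lab : V → V → Finset ℕ) (u v : V) : Prop :=
  ∃ P : TPath lab, P.FromTo u v

lemma TPath.tempReach_of_le (P : TPath lab) {i j : Fin (P.len + 1)} (hij : i ≤ j) :
    TempReach lab (P.verts i) (P.verts j) :=
  ⟨P.slice i j hij (by omega), congrArg P.verts (by ext; simp),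
    congrArg P.verts (by ext; simp [TPath.slice]; omega)⟩

lemma TempConnected.symm {u v : V} (h : TempConnected lab u v) : TempConnected lab v u :=
  h.imp fun _ hP => hP.symm

lemma TempConnected.tempReach_or_tempReach {u v : V} (h : TempConnected lab u v) :
    TempReach lab u v ∨ TempReach lab v u := by
  obtain ⟨P, ⟨i, rfl⟩, ⟨j, rfl⟩⟩ := h
  rcases le_total i j with hij | hji
  exacts [.inl (P.tempReach_of_le hij), .inr (P.tempReach_of_le hji)]

def IsDirectedWalk {u v : V} (p : (underlyingGraph lab).Walk u v) : Prop :=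
  p.support.IsChain fun a b => (lab a b).Nonempty

lemma TPath.exists_walk (P : TPath lab) :
    ∃ p : (underlyingGraph lab).Walk (P.verts 0) (P.verts (Fin.last P.len)),
      p.IsPath ∧ IsDirectedWalk p ∧ p.support = List.ofFn P.verts := by
  have hne : List.ofFn P.verts ≠ [] := by simp
  have hchain : (List.ofFn P.verts).IsChain fun a b => a ≠ b ∧ (lab a b).Nonempty :=
    List.isChain_ofFn.2 fun i hi =>
      ⟨P.inj.ne (by simp), ⟨_, P.mem_lab ⟨i, by omega⟩⟩⟩
  refine ⟨(Walk.ofSupport _ hne (hchain.imp fun _ _ h =>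
      (by exact ⟨h.1, .inl h.2⟩ : (underlyingGraph lab).Adj _ _))).copy
    (by rw [List.head_ofFn]; rfl) (by rw [List.getLast_ofFn]; exact congrArg _ (Fin.ext (by simp))),
    ?_, ?_, ?_⟩
  · simpa [Walk.isPath_def] using List.nodup_ofFn.2 P.inj
  · simpa [IsDirectedWalk] using hchain.imp fun _ _ h => h.2
  · simp

lemma TempReach.exists_walk {u v : V} (h : TempReach lab u v) :
    ∃ p : (underlyingGraph lab).Walk u v, p.IsPath ∧ IsDirectedWalk p ∧
      ∀ w ∈ p.support, TempConnected lab w u ∧ TempConnected lab w v := by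
  obtain ⟨P, rfl, rfl⟩ := h
  obtain ⟨p, hp, hpd, hsupp⟩ := P.exists_walk
  refine ⟨p, hp, hpd, fun w hw => ?_⟩
  rw [hsupp, List.mem_ofFn] at hw
  exact ⟨⟨P, hw, 0, rfl⟩, ⟨P, hw, Fin.last _, rfl⟩⟩

lemma TempConnected.exists_walk {u v : V} (h : TempConnected lab u v) :
    ∃ p : (underlyingGraph lab).Walk u v,
      ∀ w ∈ p.support, TempConnected lab w u ∧ TempConnected lab w v := by
  rcases h.tempReach_or_tempReach with h | h
  · obtain ⟨p, -, -, hp⟩ := h.exists_walk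
    exact ⟨p, hp⟩
  · obtain ⟨p, -, -, hp⟩ := h.exists_walk
    exact ⟨p.reverse, fun w hw => (hp w (by simpa using hw)).symm⟩

namespace IsTemporalOrientedTree

variable (htree : IsTemporalOrientedTree lab)
include htree

lemma path_eq {u v : V} {p q : (underlyingGraph lab).Walk u v} (hp : p.IsPath) (hq : q.IsPath) :
    p = q :=
  (htree.1.existsUnique_path u v).unique hp hq

lemma eq_of_isDirectedWalk {u v : V} {p : (underlyingGraph lab).Walk u v}
    {q : (underlyingGraph lab).Walk v u} (hp : p.IsPath) (hq : q.IsPath)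
    (hpd : IsDirectedWalk p) (hqd : IsDirectedWalk q) : u = v := by
  -- `q` is `p` reversed, so the first arc of `p` would be present in both directions.
  obtain rfl : q = p.reverse := htree.path_eq hq hp.reverse
  rw [IsDirectedWalk, Walk.support_reverse, List.isChain_reverse] at hqd
  cases p with
  | nil => rfl
  | cons hadj p =>
    rw [IsDirectedWalk, Walk.support_cons, ← p.cons_tail_support, List.isChain_cons_cons] at hpd
    rw [Walk.support_cons, ← p.cons_tail_support, List.isChain_cons_cons] at hqd
    exact absurd (htree.2 _ _ hpd.1) hqd.1.ne_empty

lemma isPath_append {u v w : V} {p : (underlyingGraph lab).Walk u v}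
    {q : (underlyingGraph lab).Walk v w} (hp : p.IsPath) (hq : q.IsPath)
    (hpd : IsDirectedWalk p) (hqd : IsDirectedWalk q) : (p.append q).IsPath := by
  classical
  rw [Walk.isPath_def, Walk.support_append, List.nodup_append]
  refine ⟨hp.support_nodup, hq.support_nodup.sublist q.support.tail_sublist, ?_⟩
  -- A vertex `z ≠ v` on both paths would give directed paths `z ⇝ v` and `v ⇝ z`.
  rintro z hzp _ hzq rfl
  have hzv : z = v := htree.eq_of_isDirectedWalk (hp.dropUntil hzp)
    (hq.takeUntil (List.mem_of_mem_tail hzq))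
    (hpd.infix (p.support_dropUntil_suffix_support hzp).isInfix)
    (hqd.infix (q.support_takeUntil_prefix_support _).isInfix)
  subst hzv
  have hqnd := hq.support_nodup
  rw [← q.cons_tail_support, List.nodup_cons] at hqnd
  exact hqnd.1 hzq

lemma mem_support_of_tempReach {s y t : V} (hsy : TempReach lab s y) (hyt : TempReach lab y t)
    (r : (underlyingGraph lab).Walk s t) : y ∈ r.support := by
  classical
  obtain ⟨p, hp, hpd, -⟩ := hsy.exists_walk
  obtain ⟨q, hq, hqd, -⟩ := hyt.exists_walk
  have hpq : p.append q = r.bypass :=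
    htree.path_eq (htree.isPath_append hp hq hpd hqd) r.bypass_isPath
  apply r.support_bypass_subset_support
  rw [← hpq, Walk.mem_support_append_iff]
  exact .inr q.start_mem_support

lemma tempConnected_of_tempReach {s y t v v' : V} (hsy : TempReach lab s y)
    (hyt : TempReach lab y t) (hsv : TempConnected lab s v) (hvv' : TempConnected lab v v')
    (hv't : TempConnected lab v' t) : TempConnected lab y v ∨ TempConnected lab y v' := by
  obtain ⟨r₁, hr₁⟩ := hsv.exists_walk
  obtain ⟨r₂, hr₂⟩ := hvv'.exists_walk
  obtain ⟨r₃, hr₃⟩ := hv't.exists_walk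
  have hy := htree.mem_support_of_tempReach hsy hyt (r₁.append (r₂.append r₃))
  simp only [Walk.mem_support_append_iff] at hy
  rcases hy with hy | hy | hy
  exacts [.inl (hr₁ y hy).2, .inl (hr₂ y hy).1, .inr (hr₃ y hy).1]

lemma tempReach_iff_not_tempReach {x y z v v' : V} (hxy : TempConnected lab x y)
    (hyz : TempConnected lab y z) (hxv : TempConnected lab x v) (hvv' : TempConnected lab v v')
    (hv'z : TempConnected lab v' z) (hyv : ¬ TempConnected lab y v)
    (hyv' : ¬ TempConnected lab y v') : TempReach lab x y ↔ ¬ TempReach lab y z := by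
  constructor
  · intro hxy' hyz'
    exact (htree.tempConnected_of_tempReach hxy' hyz' hxv hvv' hv'z).elim hyv hyv'
  · intro hyz'
    by_contra hxy'
    have hzy := hyz.tempReach_or_tempReach.resolve_left hyz'
    have hyx := hxy.tempReach_or_tempReach.resolve_left hxy'
    exact (htree.tempConnected_of_tempReach hzy hyx hv'z.symm hvv'.symm hxv.symm).elim hyv' hyv

end IsTemporalOrientedTree

lemma compl_connGraph_adj {u v : V} :
    (connGraph lab)ᶜ.Adj u v ↔ u ≠ v ∧ ¬ TempConnected lab u v := by
  rw [compl_adj]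
  exact and_congr_right fun huv => not_congr ⟨And.right, And.intro huv⟩

lemma Nat.mod_ne_mod_of_lt_of_lt_add {a b n : ℕ} (hab : a < b) (hba : b < a + n) :
    a % n ≠ b % n := fun h => by
  have := Nat.ModEq.eq_of_abs_lt h (abs_sub_lt_iff.2 ⟨by omega, by omega⟩)
  omega

namespace IsInducedCycle

variable {G : SimpleGraph V} {n : ℕ} [NeZero n] {c : Fin n → V}

lemma adj_ofNat_succ (hc : IsInducedCycle G n c) (k : ℕ) :
    G.Adj (c (Fin.ofNat n k)) (c (Fin.ofNat n (k + 1))) :=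
  (hc.2 _ _).2 (.inl (by simp [Nat.mod_add_mod]))

lemma ofNat_ne {k l : ℕ} (hc : IsInducedCycle G n c) (hkl : k < l) (hlk : l < k + n) :
    c (Fin.ofNat n k) ≠ c (Fin.ofNat n l) := fun h =>
  Nat.mod_ne_mod_of_lt_of_lt_add hkl hlk (by simpa [Fin.ext_iff] using hc.1 h)

lemma not_adj_ofNat {k l : ℕ} (hc : IsInducedCycle G n c) (hkl : k + 2 ≤ l)
    (hlk : l + 2 ≤ k + n) : ¬ G.Adj (c (Fin.ofNat n k)) (c (Fin.ofNat n l)) := fun h => by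
  rcases (hc.2 _ _).1 h with h | h <;> simp only [Fin.val_ofNat, Nat.mod_add_mod] at h
  · exact Nat.mod_ne_mod_of_lt_of_lt_add (by omega) (by omega) h
  · exact Nat.mod_ne_mod_of_lt_of_lt_add (by omega) (by omega)
      (h.trans (Nat.add_mod_right k n).symm)

lemma tempConnected_ofNat (hc : IsInducedCycle (connGraph lab)ᶜ n c) (k l : ℕ)
    (hkl : (k + 2 ≤ l ∧ l + 2 ≤ k + n) ∨ (l + 2 ≤ k ∧ k + 2 ≤ l + n)) :
    TempConnected lab (c (Fin.ofNat n k)) (c (Fin.ofNat n l)) := by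
  have key : ∀ k l : ℕ, k + 2 ≤ l → l + 2 ≤ k + n →
      TempConnected lab (c (Fin.ofNat n k)) (c (Fin.ofNat n l)) := fun k l h₁ h₂ =>
    by_contra fun h =>
      hc.not_adj_ofNat h₁ h₂ (compl_connGraph_adj.2 ⟨hc.ofNat_ne (by omega) (by omega), h⟩)
  rcases hkl with ⟨h₁, h₂⟩ | ⟨h₁, h₂⟩
  exacts [key k l h₁ h₂, (key l k h₁ h₂).symm]

lemma not_tempConnected_ofNat (hc : IsInducedCycle (connGraph lab)ᶜ n c)
    (k l : ℕ) (hkl : l = k + 1 ∨ k = l + 1) :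
    ¬ TempConnected lab (c (Fin.ofNat n k)) (c (Fin.ofNat n l)) := by
  rcases hkl with rfl | rfl
  · exact (compl_connGraph_adj.1 (hc.adj_ofNat_succ k)).2
  · exact fun h => (compl_connGraph_adj.1 (hc.adj_ofNat_succ l)).2 h.symm

end IsInducedCycle

end

theorem connGraph_no_antihole_general {V : Type*} (lab : V → V → Finset ℕ)
    (htree : IsTemporalOrientedTree lab) :
    ¬ HasAntihole (connGraph lab) := by
  rintro ⟨n, hn, c, hc⟩
  have : NeZero n := ⟨by omega⟩
  have hcon := hc.tempConnected_ofNat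
  have hncon := hc.not_tempConnected_ofNat
  -- `hⱼ`: the two edges at `cⱼ` on the closed walk `c₁ c₃ c₅ c₂ c₄` are oriented oppositely.
  have h₃ := htree.tempReach_iff_not_tempReach (hcon 1 3 (by omega)) (hcon 3 5 (by omega))
    (hcon 1 4 (by omega)) (hcon 4 2 (by omega)) (hcon 2 5 (by omega)) (hncon 3 4 (by omega))
    (hncon 3 2 (by omega))
  have h₅ := htree.tempReach_iff_not_tempReach (hcon 3 5 (by omega)) (hcon 5 2 (by omega))
    (hcon 3 6 (by omega)) (hcon 6 4 (by omega)) (hcon 4 2 (by omega)) (hncon 5 6 (by omega))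
    (hncon 5 4 (by omega))
  have h₂ := htree.tempReach_iff_not_tempReach (hcon 5 2 (by omega)) (hcon 2 4 (by omega))
    (hcon 5 3 (by omega)) (hcon 3 1 (by omega)) (hcon 1 4 (by omega)) (hncon 2 3 (by omega))
    (hncon 2 1 (by omega))
  have h₄ := htree.tempReach_iff_not_tempReach (hcon 2 4 (by omega)) (hcon 4 1 (by omega))
    (hcon 2 5 (by omega)) (hcon 5 3 (by omega)) (hcon 3 1 (by omega)) (hncon 4 5 (by omega))
    (hncon 4 3 (by omega))
  have h₁ := htree.tempReach_iff_not_tempReach (hcon 4 1 (by omega)) (hcon 1 3 (by omega))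
    (hcon 4 2 (by omega)) (hcon 2 0 (by omega)) (hcon 0 3 (by omega)) (hncon 1 2 (by omega))
    (hncon 1 0 (by omega))
  tauto

/-- The connectivity graph of a temporal oriented tree contains no anti-hole. -/
theorem connGraph_no_antihole {V : Type*} [Fintype V] (lab : V → V → Finset ℕ)
    (hpos : PositiveLabels lab) (htree : IsTemporalOrientedTree lab) :
    ¬ HasAntihole (connGraph lab) :=
  connGraph_no_antihole_general lab htree
end
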